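/- For n = 3 and for both sign choices, the identity A_{22}^± ∘ 𝒱_2 ∘ A_{21}^± = A_{21}^± ∘ 𝒱_2 ∘ A_{22}^± holds in End_ℂ(L). -/

import Mathlib

/-!
For automorphisms `e, f` of `L`, moving the multiplications past `f` gives
`(e m_a) m_v (f m_b) = e f m_{f⁻¹(a v) b}`.
Here `a_{22}^± 𝒱_2` is a polynomial not involving `x_{21}` and `a_{21}^± 𝒱_2` one not
involving `x_{22}` (the Vandermonde factor cancels the denominator), so the inner shift acts
trivially on both sides; as the shifts commute, both sides equal `δ^{22} δ^{21} m_{a_{22} 𝒱_2 a_{21}}`.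
-/

open scoped BigOperators
open MvPolynomial

noncomputable section

/-- The polynomial ring `Λ = ℂ[x_{ki}]` (variables indexed by pairs `(k, i)`). -/
abbrev Lam : Type := MvPolynomial (ℕ × ℕ) ℂ

/-- `L`, the field of fractions of `Λ`. -/
abbrev L : Type := FractionRing Lam

/-- The variable `x_{ki}` as an element of `L`. -/
def x (k i : ℕ) : L := algebraMap Lam L (X (k, i))

/-- The algebra automorphism of `Λ` sending `x_v ↦ x_v - 1` and fixing the other variables. -/
def shiftEquiv (v : ℕ × ℕ) : Lam ≃ₐ[ℂ] Lam :=
  AlgEquiv.ofAlgHom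
    (aeval (fun w => if w = v then X w - 1 else X w))
    (aeval (fun w => if w = v then X w + 1 else X w))
    (by apply MvPolynomial.algHom_ext; intro w; by_cases h : w = v <;> simp [h])
    (by apply MvPolynomial.algHom_ext; intro w; by_cases h : w = v <;> simp [h])

/-- The automorphism `δ^{ki}` of `L`, determined by `δ^{ki}(x_{ℓj}) = x_{ℓj} - δ_{ℓk}δ_{ij}`. -/
def δ (k i : ℕ) : L ≃ₐ[ℂ] L := IsFractionRing.algEquivOfAlgEquiv (shiftEquiv (k, i))

/-- Multiplication by `a ∈ L` as a `ℂ`-linear endomorphism `m_a` of `L`. -/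
def mulOp (a : L) : Module.End ℂ L := LinearMap.mulLeft ℂ a

/-- A field automorphism of `L` as a `ℂ`-linear endomorphism of `L`. -/
def lin (e : L ≃ₐ[ℂ] L) : Module.End ℂ L := e.toLinearMap

/-- The rational function `a_{ki}^+`. -/
def aP (k i : ℕ) : L :=
  -((∏ j ∈ Finset.Icc 1 (k + 1), (x (k + 1) j - x k i)) /
    ∏ j ∈ (Finset.Icc 1 k).erase i, (x k j - x k i))

/-- The rational function `a_{ki}^-`. -/
def aM (k i : ℕ) : L :=
  (∏ j ∈ Finset.Icc 1 (k - 1), (x (k - 1) j - x k i)) /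
    ∏ j ∈ (Finset.Icc 1 k).erase i, (x k j - x k i)

/-- The operator `A_{ki}^+ = δ^{ki} ∘ m_{a_{ki}^+}`. -/
def Ap (k i : ℕ) : Module.End ℂ L := lin (δ k i) * mulOp (aP k i)

/-- The operator `A_{ki}^- = (δ^{ki})^{-1} ∘ m_{a_{ki}^-}`. -/
def Am (k i : ℕ) : Module.End ℂ L := lin (δ k i).symm * mulOp (aM k i)

/-- The operator `X_k^+ = ∑_{i=1}^k A_{ki}^+`. -/
def Xp (k : ℕ) : Module.End ℂ L := ∑ i ∈ Finset.Icc 1 k, Ap k i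

/-- The operator `X_k^- = ∑_{i=1}^k A_{ki}^-`. -/
def Xm (k : ℕ) : Module.End ℂ L := ∑ i ∈ Finset.Icc 1 k, Am k i

/-- The operator `X_{kk}`. -/
def Xd (k : ℕ) : Module.End ℂ L :=
  mulOp ((∑ j ∈ Finset.Icc 1 k, (x k j + (j : L) - 1)) -
    ∑ i ∈ Finset.Icc 1 (k - 1), (x (k - 1) i + (i : L) - 1))

/-- The Vandermonde polynomial `∏_{1 ≤ i < j ≤ k} (x_{ki} - x_{kj})`, as an element of `L`. -/
def vand (k : ℕ) : L :=
  ∏ p ∈ (Finset.Icc 1 k ×ˢ Finset.Icc 1 k).filter (fun p => p.1 < p.2),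
    (x k p.1 - x k p.2)

/-- The operator `𝒱_k = m_{∏_{i<j}(x_{ki} - x_{kj})}`. -/
def Vop (k : ℕ) : Module.End ℂ L := mulOp (vand k)

/-- The generating set of `U_n`: the `X_k^±` for `1 ≤ k ≤ n-1` and the `X_{kk}` for `1 ≤ k ≤ n`. -/
def Ugens (n : ℕ) : Set (Module.End ℂ L) :=
  {u | ∃ k, 1 ≤ k ∧ k + 1 ≤ n ∧ (u = Xp k ∨ u = Xm k)} ∪
    {u | ∃ k, 1 ≤ k ∧ k ≤ n ∧ u = Xd k}

/-- `U_n`, the Gelfand–Tsetlin realization of `U(gl_n)` inside `End_ℂ(L)`. -/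
def Ualg (n : ℕ) : Subalgebra ℂ (Module.End ℂ L) := Algebra.adjoin ℂ (Ugens n)

/-- `𝒜(gl_n)`, the subalgebra generated by `U_n` together with `𝒱_2, …, 𝒱_n`. -/
def Agl (n : ℕ) : Subalgebra ℂ (Module.End ℂ L) :=
  Algebra.adjoin ℂ (Ugens n ∪ {u | ∃ k, 2 ≤ k ∧ k ≤ n ∧ u = Vop k})

lemma shiftEquiv_X (v w : ℕ × ℕ) :
    shiftEquiv v (X w) = if w = v then X w - 1 else X w := by
  simp [shiftEquiv]

lemma shiftEquiv_commute (v w : ℕ × ℕ) : Commute (shiftEquiv v) (shiftEquiv w) := by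
  refine AlgEquiv.coe_toAlgHom_injective (MvPolynomial.algHom_ext fun u => ?_)
  simp only [AlgEquiv.coe_toAlgHom, AlgEquiv.mul_apply, shiftEquiv_X]
  split_ifs <;> simp_all [map_sub, shiftEquiv_X]

lemma δ_commute (k i l j : ℕ) : Commute (δ k i) (δ l j) := by
  ext z
  obtain ⟨a, b, -, rfl⟩ := IsFractionRing.div_surjective (A := Lam) z
  simp only [δ, AlgEquiv.mul_apply, map_div₀, IsFractionRing.algEquivOfAlgEquiv_algebraMap,
    ← AlgEquiv.mul_apply (shiftEquiv (k, i)), (shiftEquiv_commute (k, i) (l, j)).eq]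

lemma δ_x (k i l j : ℕ) :
    δ k i (x l j) = if (l, j) = (k, i) then x l j - 1 else x l j := by
  rw [δ, x, IsFractionRing.algEquivOfAlgEquiv_algebraMap, shiftEquiv_X]
  split <;> simp [map_sub]

lemma δ_symm_x (k i l j : ℕ) :
    (δ k i).symm (x l j) = if (l, j) = (k, i) then x l j + 1 else x l j := by
  rw [AlgEquiv.symm_apply_eq]
  split <;> simp [δ_x, *]

lemma x_sub_x_ne_zero {k i l j : ℕ} (h : (k, i) ≠ (l, j)) : x k i - x l j ≠ 0 :=
  sub_ne_zero.mpr fun hx => h (MvPolynomial.X_injective (IsFractionRing.injective Lam L hx))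

lemma lin_mulOp_mul_mulOp_mul_lin_mulOp (e f : L ≃ₐ[ℂ] L) (a v b : L) :
    lin e * mulOp a * mulOp v * (lin f * mulOp b) = lin (e * f) * mulOp (f.symm (a * v) * b) := by
  ext z
  simp only [lin, mulOp, Module.End.mul_apply, LinearMap.mulLeft_apply,
    AlgEquiv.toLinearMap_apply, AlgEquiv.mul_apply, map_mul, AlgEquiv.apply_symm_apply]
  ring

theorem lin_mulOp_sandwich_comm {e f : L ≃ₐ[ℂ] L} (hef : Commute e f) {a v b : L}
    (ha : f (a * v) = a * v) (hb : e (b * v) = b * v) :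
    lin e * mulOp a * mulOp v * (lin f * mulOp b) =
      lin f * mulOp b * mulOp v * (lin e * mulOp a) := by
  rw [lin_mulOp_mul_mulOp_mul_lin_mulOp, lin_mulOp_mul_mulOp_mul_lin_mulOp, hef.eq,
    f.symm_apply_eq.mpr ha.symm, e.symm_apply_eq.mpr hb.symm, mul_right_comm a, mul_right_comm b,
    mul_comm a b]

lemma vand_two : vand 2 = x 2 1 - x 2 2 := by
  rw [vand, show ((Finset.Icc 1 2 ×ˢ Finset.Icc 1 2).filter
      (fun p : ℕ × ℕ => p.1 < p.2)) = {(1, 2)} by decide, Finset.prod_singleton]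

lemma aP_two_one_mul_vand_two : aP 2 1 * vand 2 = ∏ j ∈ Finset.Icc 1 3, (x 3 j - x 2 1) := by
  rw [aP, show (Finset.Icc 1 2).erase 1 = {2} from rfl, Finset.prod_singleton, vand_two,
    ← div_neg, neg_sub, div_mul_cancel₀ _ (x_sub_x_ne_zero (by decide))]

lemma aP_two_two_mul_vand_two : aP 2 2 * vand 2 = -∏ j ∈ Finset.Icc 1 3, (x 3 j - x 2 2) := by
  rw [aP, show (Finset.Icc 1 2).erase 2 = {1} from rfl, Finset.prod_singleton, vand_two,
    neg_mul, div_mul_cancel₀ _ (x_sub_x_ne_zero (by decide))]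

lemma aM_two_one_mul_vand_two : aM 2 1 * vand 2 = -∏ j ∈ Finset.Icc 1 1, (x 1 j - x 2 1) := by
  rw [aM, show (Finset.Icc 1 2).erase 1 = {2} from rfl, Finset.prod_singleton, vand_two,
    ← neg_sub (x 2 2), mul_neg, div_mul_cancel₀ _ (x_sub_x_ne_zero (by decide))]

lemma aM_two_two_mul_vand_two : aM 2 2 * vand 2 = ∏ j ∈ Finset.Icc 1 1, (x 1 j - x 2 2) := by
  rw [aM, show (Finset.Icc 1 2).erase 2 = {1} from rfl, Finset.prod_singleton, vand_two,
    div_mul_cancel₀ _ (x_sub_x_ne_zero (by decide))]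

/-- `A_{22}^± ∘ 𝒱_2 ∘ A_{21}^± = A_{21}^± ∘ 𝒱_2 ∘ A_{22}^±` for both signs. -/
theorem A22_V2_A21_symmetry :
    Ap 2 2 * Vop 2 * Ap 2 1 = Ap 2 1 * Vop 2 * Ap 2 2 ∧
    Am 2 2 * Vop 2 * Am 2 1 = Am 2 1 * Vop 2 * Am 2 2 := by
  constructor
  · refine lin_mulOp_sandwich_comm (δ_commute 2 2 2 1) ?_ ?_
    · rw [aP_two_two_mul_vand_two]
      simp [map_prod, δ_x]
    · rw [aP_two_one_mul_vand_two]
      simp [map_prod, δ_x]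
  · refine lin_mulOp_sandwich_comm (δ_commute 2 2 2 1).inv_inv ?_ ?_
    · rw [aM_two_two_mul_vand_two]
      simp [δ_symm_x]
    · rw [aM_two_one_mul_vand_two]
      simp [δ_symm_x]
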